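/- Let α, α₁, α₂ ∈ ℝ and let (u_n)_{n≥0}, (b_n)_{n≥0} be real sequences satisfying, for all n ≥ 2, the stationary nonisospectral B-Toda system: α + α₁(b_{n+1} − 2b_n + b_{n−1}) + α₂[b_{n+1}² − b_{n−1}² − 2b_n(b_{n+1} − b_{n−1}) + u_{n−1}(2u_n − b_n + b_{n−2}) − u_{n+1}(2u_n − b_{n+2} + b_n)] = 0 and α b_n + α₁ u_n(b_{n+1} − b_{n−1}) + α₂ u_n[(b_{n+1} − b_{n−1})² + u_{n+1}(b_{n+2} − b_n) + u_{n−1}(b_n − b_{n−2})] = 0. Then there exists a real constant A₀ such that for all n ≥ 2: (n−2)α + α₁(b_n − b_{n−1}) + α₂[(b_n − b_{n−1})² − 2u_{n−1}u_n + u_{n−1}(b_n − b_{n−2}) + u_n(b_{n+1} − b_{n−1})] − A₀ = 0, and α(b_n − (2n−3)u_n) + 2α₂ u_n[(b_n − b_{n−1})(b_{n+1} − b_n) + u_n(u_{n−1} + u_{n+1} − b_{n+1} + b_{n−1})] + 2A₀ u_n = 0. -/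

import Mathlib

/-!
The left-hand side `F n` of the first equation (without `A₀`) is a first integral: its
increment `F (n + 1) - F n` is exactly the first lattice equation at `n`, so `F` is constant,
equal to `A₀ := F 2`. The second lattice equation at `n` is the second equation plus
`u n * ((F n - A₀) + (F (n + 1) - A₀))`, which therefore vanishes.
-/

namespace BToda

variable (α α₁ α₂ : ℝ) (u b : ℕ → ℝ)

/- Each quantity below is the paper's expression at `n = m + 2`, so that no truncated
subtraction `n - 1`, `n - 2` occurs. -/

def firstIntegral (m : ℕ) : ℝ :=
  m * α + α₁ * (b (m + 2) - b (m + 1))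
    + α₂ * ((b (m + 2) - b (m + 1)) ^ 2 - 2 * u (m + 1) * u (m + 2)
        + u (m + 1) * (b (m + 2) - b m) + u (m + 2) * (b (m + 3) - b (m + 1)))

def stationaryEq₁ (m : ℕ) : ℝ :=
  α + α₁ * (b (m + 3) - 2 * b (m + 2) + b (m + 1))
    + α₂ * (b (m + 3) ^ 2 - b (m + 1) ^ 2 - 2 * b (m + 2) * (b (m + 3) - b (m + 1))
        + u (m + 1) * (2 * u (m + 2) - b (m + 2) + b m)
        - u (m + 3) * (2 * u (m + 2) - b (m + 4) + b (m + 2)))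

def stationaryEq₂ (m : ℕ) : ℝ :=
  α * b (m + 2) + α₁ * u (m + 2) * (b (m + 3) - b (m + 1))
    + α₂ * u (m + 2) * ((b (m + 3) - b (m + 1)) ^ 2 + u (m + 3) * (b (m + 4) - b (m + 2))
        + u (m + 1) * (b (m + 2) - b m))

def painleveEq₂ (A₀ : ℝ) (m : ℕ) : ℝ :=
  α * (b (m + 2) - (2 * m + 1) * u (m + 2))
    + 2 * α₂ * u (m + 2) * ((b (m + 2) - b (m + 1)) * (b (m + 3) - b (m + 2))
        + u (m + 2) * (u (m + 1) + u (m + 3) - b (m + 3) + b (m + 1)))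
    + 2 * A₀ * u (m + 2)

theorem firstIntegral_succ_sub (m : ℕ) :
    firstIntegral α α₁ α₂ u b (m + 1) - firstIntegral α α₁ α₂ u b m
      = stationaryEq₁ α α₁ α₂ u b m := by
  unfold firstIntegral stationaryEq₁
  push_cast
  ring

theorem stationaryEq₂_eq (A₀ : ℝ) (m : ℕ) :
    stationaryEq₂ α α₁ α₂ u b m = painleveEq₂ α α₂ u b A₀ m
      + u (m + 2) * ((firstIntegral α α₁ α₂ u b m - A₀)
        + (firstIntegral α α₁ α₂ u b (m + 1) - A₀)) := by
  unfold stationaryEq₂ painleveEq₂ firstIntegral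
  push_cast
  ring

variable {α α₁ α₂ u b}

theorem firstIntegral_eq_firstIntegral_zero (h₁ : ∀ m, stationaryEq₁ α α₁ α₂ u b m = 0)
    (m : ℕ) : firstIntegral α α₁ α₂ u b m = firstIntegral α α₁ α₂ u b 0 := by
  induction m with
  | zero => rfl
  | succ m ih => linear_combination firstIntegral_succ_sub α α₁ α₂ u b m + h₁ m + ih

theorem painleveEq₂_eq_zero (h₁ : ∀ m, stationaryEq₁ α α₁ α₂ u b m = 0)
    (h₂ : ∀ m, stationaryEq₂ α α₁ α₂ u b m = 0) (m : ℕ) :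
    painleveEq₂ α α₂ u b (firstIntegral α α₁ α₂ u b 0) m = 0 := by
  linear_combination h₂ m - stationaryEq₂_eq α α₁ α₂ u b (firstIntegral α α₁ α₂ u b 0) m
    - u (m + 2) * (firstIntegral_eq_firstIntegral_zero h₁ m
      + firstIntegral_eq_firstIntegral_zero h₁ (m + 1))

end BToda

open BToda in
theorem stationary_BToda_dP
    (α α₁ α₂ : ℝ) (u b : ℕ → ℝ)
    (h1 : ∀ n : ℕ, 2 ≤ n →
      α + α₁ * (b (n + 1) - 2 * b n + b (n - 1))
        + α₂ * ((b (n + 1)) ^ 2 - (b (n - 1)) ^ 2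
            - 2 * b n * (b (n + 1) - b (n - 1))
            + u (n - 1) * (2 * u n - b n + b (n - 2))
            - u (n + 1) * (2 * u n - b (n + 2) + b n)) = 0)
    (h2 : ∀ n : ℕ, 2 ≤ n →
      α * b n + α₁ * u n * (b (n + 1) - b (n - 1))
        + α₂ * u n * ((b (n + 1) - b (n - 1)) ^ 2
            + u (n + 1) * (b (n + 2) - b n)
            + u (n - 1) * (b n - b (n - 2))) = 0) :
    ∃ A₀ : ℝ, ∀ n : ℕ, 2 ≤ n →
      (((n : ℝ) - 2) * α + α₁ * (b n - b (n - 1))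
        + α₂ * ((b n - b (n - 1)) ^ 2 - 2 * u (n - 1) * u n
            + u (n - 1) * (b n - b (n - 2))
            + u n * (b (n + 1) - b (n - 1))) - A₀ = 0) ∧
      (α * (b n - (2 * (n : ℝ) - 3) * u n)
        + 2 * α₂ * u n * ((b n - b (n - 1)) * (b (n + 1) - b n)
            + u n * (u (n - 1) + u (n + 1) - b (n + 1) + b (n - 1)))
        + 2 * A₀ * u n = 0) := by
  have h₁ (m : ℕ) : stationaryEq₁ α α₁ α₂ u b m = 0 := by
    simpa only [stationaryEq₁, Nat.reduceSubDiff, Nat.add_assoc,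
      Nat.reduceAdd] using h1 (m + 2) (by omega)
  have h₂ (m : ℕ) : stationaryEq₂ α α₁ α₂ u b m = 0 := by
    simpa only [stationaryEq₂, Nat.reduceSubDiff, Nat.add_assoc,
      Nat.reduceAdd] using h2 (m + 2) (by omega)
  refine ⟨firstIntegral α α₁ α₂ u b 0, fun n hn => ?_⟩
  obtain ⟨m, rfl⟩ := Nat.exists_eq_add_of_le' hn
  have hF := firstIntegral_eq_firstIntegral_zero h₁ m
  have hP := painleveEq₂_eq_zero h₁ h₂ m
  rw [firstIntegral] at hF
  unfold painleveEq₂ at hP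
  simp only [Nat.reduceSubDiff, Nat.add_assoc, Nat.reduceAdd]
  push_cast
  constructor
  · linear_combination hF
  · linear_combination hP
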